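/- For a uniformly random permutation of an n-element set with n ≥ k, the expected number of points lying in cycles of length dividing k is exactly τ(k), the number of divisors of k. -/

import Mathlib

/-!
For any point `x`, the length of the cycle through `x` is uniformly distributed on
`{1, …, n}`: exactly `(n - 1)!` permutations put `x` in a cycle of any given length `ℓ ≤ n`.
Write the ambient type as `Option β` with `x = none`, and a permutation as
`swap none o * optionCongr σ` (`Equiv.Perm.decomposeOption`). If `o = none` then `x` is fixed;
if `o = some a` then the cycle of `none` is `none` followed by the `σ`-cycle of `a`, so `x` has
period `ℓ + 1` exactly when `a` has period `ℓ` under `σ`. Induction on the size of the type gives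
`(n - 1)!`. Summing over the divisors `ℓ` of `k` and over the `n` points, the permutations
contribute `n · τ(k) · (n - 1)! = τ(k) · n!` points in cycles of length dividing `k`.
-/

open Equiv Function Finset
open scoped Nat

namespace Equiv.Perm

variable {α β : Type*}

theorem minimalPeriod_permCongr (e : α ≃ β) (π : Perm α) (x : α) :
    minimalPeriod (e.permCongr π) (e x) = minimalPeriod π x := by
  have hsemi : Semiconj e π (e.permCongr π) := fun y => by simp
  refine minimalPeriod_eq_minimalPeriod_iff.mpr fun n => ?_
  simp only [IsPeriodicPt, IsFixedPt, ← (hsemi.iterate_right n).eq, e.apply_eq_iff_eq]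

theorem minimalPeriod_pos [Finite α] (σ : Perm α) (x : α) : 0 < minimalPeriod σ x :=
  minimalPeriod_pos_of_mem_periodicPts (σ.injective.mem_periodicPts x)

theorem minimalPeriod_swap_none_mul_optionCongr [Finite α] [DecidableEq α] (a : α)
    (σ : Perm α) :
    minimalPeriod (swap none (some a) * optionCongr σ) none = minimalPeriod σ a + 1 := by
  set π := swap none (some a) * optionCongr σ
  set p := minimalPeriod σ a
  have hp : 0 < p := σ.minimalPeriod_pos a
  have hπ_some (y : α) (hy : σ y ≠ a) : π (some y) = some (σ y) := by
    simp [π, swap_apply_of_ne_of_ne, hy]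
  -- the orbit of `none` is `none, some a, some (σ a), …, some (σ^[p - 1] a)`, then `none` again
  have horbit : ∀ j < p, π^[j + 1] none = some (σ^[j] a) := by
    intro j hj
    induction j with
    | zero => simp [π]
    | succ j ih =>
      have hne : σ^[j + 1] a ≠ a := not_isPeriodicPt_of_pos_of_lt_minimalPeriod (by omega) hj
      rw [iterate_succ_apply', ih (by omega), hπ_some _ (by rwa [← iterate_succ_apply' σ]),
        iterate_succ_apply']
  have hperiodic : IsPeriodicPt π (p + 1) none := by
    obtain ⟨q, hq⟩ : ∃ q, p = q + 1 := ⟨p - 1, by omega⟩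
    have hback : σ (σ^[q] a) = a := by
      have h : σ^[p] a = a := iterate_minimalPeriod
      rwa [hq, iterate_succ_apply'] at h
    rw [IsPeriodicPt, IsFixedPt, iterate_succ_apply', hq, horbit q (by omega)]
    simp [π, hback]
  refine le_antisymm (hperiodic.minimalPeriod_le (by omega)) (not_lt.mp fun hlt => ?_)
  have hpos := hperiodic.minimalPeriod_pos (by omega)
  have hfix := iterate_minimalPeriod (f := ⇑π) (x := none)
  rw [← Nat.sub_add_cancel hpos, horbit _ (by omega)] at hfix
  exact Option.some_ne_none _ hfix

theorem minimalPeriod_decomposeOption_symm_none [Finite α] [DecidableEq α] (o : Option α)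
    (σ : Perm α) :
    minimalPeriod (decomposeOption.symm (o, σ)) none = o.elim 1 (minimalPeriod σ · + 1) := by
  cases o with
  | none => simp [minimalPeriod_eq_one_iff_isFixedPt, IsFixedPt]
  | some a => exact minimalPeriod_swap_none_mul_optionCongr a σ

theorem card_minimalPeriod_eq_congr [Fintype α] [DecidableEq α] [Fintype β] [DecidableEq β]
    (e : α ≃ β) (x : α) (ℓ : ℕ) :
    #{π : Perm α | minimalPeriod π x = ℓ} = #{π : Perm β | minimalPeriod π (e x) = ℓ} :=
  card_equiv e.permCongr fun π => by simp [minimalPeriod_permCongr]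

theorem card_minimalPeriod_option_none_succ [Fintype α] [DecidableEq α] (ℓ : ℕ) :
    #{π : Perm (Option α) | minimalPeriod π none = ℓ + 1} =
      (if ℓ = 0 then (Fintype.card α)! else 0) + ∑ a, #{σ : Perm α | minimalPeriod σ a = ℓ} := by
  simp only [card_filter]
  rw [← decomposeOption.symm.sum_comp, Fintype.sum_prod_type, Fintype.sum_option]
  simp only [minimalPeriod_decomposeOption_symm_none, Option.elim, add_left_inj]
  simp [Fintype.card_perm]

theorem card_minimalPeriod_eq [Fintype α] [DecidableEq α] (x : α) {ℓ : ℕ} (hℓ : 0 < ℓ)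
    (hℓα : ℓ ≤ Fintype.card α) :
    #{π : Perm α | minimalPeriod π x = ℓ} = (Fintype.card α - 1)! := by
  induction hcard : Fintype.card α generalizing α ℓ with
  | zero => omega
  | succ n ih =>
    have hcompl : Fintype.card {y // y ≠ x} = n := by
      have h := Fintype.card_congr (optionSubtypeNe x)
      rw [Fintype.card_option, hcard] at h
      omega
    obtain ⟨ℓ, rfl⟩ : ∃ ℓ', ℓ = ℓ' + 1 := ⟨ℓ - 1, by omega⟩
    rw [← optionSubtypeNe_none x, ← card_minimalPeriod_eq_congr (optionSubtypeNe x),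
      card_minimalPeriod_option_none_succ, hcompl]
    rcases Nat.eq_zero_or_pos ℓ with rfl | hℓ
    · simp [(minimalPeriod_pos _ _).ne']
    · obtain ⟨m, rfl⟩ : ∃ m, n = m + 1 := ⟨n - 1, by omega⟩
      rw [if_neg hℓ.ne', zero_add, sum_congr rfl fun a _ => ih a hℓ (by omega) hcompl]
      simp only [sum_const, card_univ, hcompl, smul_eq_mul, Nat.add_sub_cancel,
        Nat.factorial_succ]

theorem card_minimalPeriod_dvd [Fintype α] [DecidableEq α] (x : α) {k : ℕ} (hk : 0 < k)
    (hkα : k ≤ Fintype.card α) :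
    #{π : Perm α | minimalPeriod π x ∣ k} = k.divisors.card * (Fintype.card α - 1)! := by
  have hsplit (π : Perm α) : (if minimalPeriod π x ∣ k then 1 else 0) =
      ∑ ℓ ∈ k.divisors, if minimalPeriod π x = ℓ then 1 else 0 := by
    simp [hk.ne']
  calc #{π : Perm α | minimalPeriod π x ∣ k}
      = ∑ ℓ ∈ k.divisors, #{π : Perm α | minimalPeriod π x = ℓ} := by
        simp only [card_filter, hsplit]
        exact sum_comm
    _ = ∑ ℓ ∈ k.divisors, (Fintype.card α - 1)! := sum_congr rfl fun ℓ hℓ =>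
        card_minimalPeriod_eq x (Nat.pos_of_mem_divisors hℓ) ((Nat.divisor_le hℓ).trans hkα)
    _ = k.divisors.card * (Fintype.card α - 1)! := by rw [sum_const, smul_eq_mul]

theorem ncard_orbit_zpowers [Finite α] (π : Perm α) (x : α) :
    (MulAction.orbit (Subgroup.zpowers π) x).ncard = minimalPeriod π x := by
  classical
  have := Fintype.ofFinite α
  rw [Set.ncard_eq_toFinset_card', Set.toFinset_card]
  exact (MulAction.minimalPeriod_eq_card π x).symm

end Equiv.Perm

/-- For a uniformly random permutation of an `n`-element set with `n ≥ k`, the expected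
number of points lying in cycles of length dividing `k` is exactly `τ(k)`, the number of
positive divisors of `k`. -/
theorem expected_points_in_cycles_dvd (n k : ℕ) (hk : 0 < k) (hn : k ≤ n) :
    (∑ π : Equiv.Perm (Fin n),
        (({x : Fin n | (MulAction.orbit (Subgroup.zpowers π) x).ncard ∣ k}.ncard : ℚ)))
        / n.factorial
      = (Nat.divisors k).card := by
  have hcount (π : Perm (Fin n)) :
      {x : Fin n | (MulAction.orbit (Subgroup.zpowers π) x).ncard ∣ k}.ncard =
        #{x | minimalPeriod π x ∣ k} := by
    simp [Perm.ncard_orbit_zpowers, ← Set.ncard_coe_finset]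
  have hswap : ∑ π : Perm (Fin n), #{x | minimalPeriod π x ∣ k} =
      ∑ x : Fin n, #{π : Perm (Fin n) | minimalPeriod π x ∣ k} := by
    simp only [card_filter]
    exact sum_comm
  have hn0 : n ≠ 0 := by omega
  simp_rw [hcount]
  rw [← Nat.cast_sum, hswap]
  simp_rw [Perm.card_minimalPeriod_dvd _ hk (hn.trans_eq (Fintype.card_fin n).symm)]
  rw [sum_const, card_univ, Fintype.card_fin, smul_eq_mul, ← Nat.mul_factorial_pred hn0]
  push_cast
  field_simp
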